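/- arXiv:1706.01797 — 4 statements merged into one kernel-verified Lean document; each statement's English description precedes it below -/
import Mathlib

section
/- Let m, n be positive integers with m ≥ n + 1, let A be a real m×n matrix, and let B be the real m×(n+2) matrix obtained by appending a column w₁ on the left of A and a column w₂ on the right of A, and assume rank(B) > rank(A). Let b be a random vector in ℝ^m whose m coordinates are independent and identically distributed, each with a probability density function with respect to Lebesgue measure. Then with probability one, the infimum over u ∈ ℝ^{n+2} of ‖Bu − b‖² is strictly smaller than the infimum over u ∈ ℝ^n of ‖Au − b‖²; equivalently, the set of b ∈ ℝ^m for which inf_u ‖Bu − b‖² ≥ inf_u ‖Au − b‖² has probability zero under the law of b. -/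
/-!
Since the columns of `A` are columns of `B` and `rank B > rank A`, the column space of `B` contains
a nonzero vector `v` orthogonal to the column space of `A`. Moving any `A u` along `v` by the
optimal step lowers the squared residual by `(v ⬝ᵥ b)² / ‖v‖²`, so the least-squares residual
of `B` is strictly smaller than that of `A` unless `b` lies on the hyperplane `v ⬝ᵥ b = 0`.
By Fubini in a coordinate where `v` does not vanish, that hyperplane is null for any product of
atomless σ-finite measures, in particular for the law of `b`.
-/

open MeasureTheory Matrix

theorem Submodule.orthogonal_inf_ne_bot_of_lt {𝕜 E : Type*} [RCLike 𝕜] [NormedAddCommGroup E]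
    [InnerProductSpace 𝕜 E] {K₁ K₂ : Submodule 𝕜 E} [K₁.HasOrthogonalProjection] (h : K₁ < K₂) :
    K₁ᗮ ⊓ K₂ ≠ ⊥ := by
  intro h0
  have hsup := Submodule.sup_orthogonal_inf_of_hasOrthogonalProjection h.le
  rw [h0, sup_bot_eq] at hsup
  exact h.ne hsup

theorem exists_mem_ne_zero_forall_dotProduct_eq_zero_of_lt {ι : Type*} [Fintype ι]
    {V W : Submodule ℝ (ι → ℝ)} (h : V < W) :
    ∃ v ∈ W, v ≠ 0 ∧ ∀ x ∈ V, x ⬝ᵥ v = 0 := by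
  let e := (WithLp.linearEquiv 2 ℝ (ι → ℝ)).symm
  obtain ⟨_, ⟨hvV, w, hw, rfl⟩, hv0⟩ := (Submodule.ne_bot_iff _).1
    (Submodule.orthogonal_inf_ne_bot_of_lt (Submodule.map_strictMono_of_injective e.injective h))
  refine ⟨w, hw, by simpa using hv0, fun x hx => ?_⟩
  have hxw : inner ℝ (WithLp.toLp 2 x) (WithLp.toLp 2 w) = 0 := hvV (e x) ⟨x, hx, rfl⟩
  rwa [EuclideanSpace.inner_toLp_toLp, star_trivial, dotProduct_comm] at hxw

theorem range_mulVecLin_le_of_middle_columns {m n : ℕ} (A : Matrix (Fin m) (Fin n) ℝ)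
    (B : Matrix (Fin m) (Fin (n + 2)) ℝ)
    (hBmid : ∀ i (j : Fin n), B i j.castSucc.succ = A i j) :
    LinearMap.range A.mulVecLin ≤ LinearMap.range B.mulVecLin := by
  rintro _ ⟨u, rfl⟩
  refine ⟨Fin.cons 0 (Fin.snoc u 0), funext fun i => ?_⟩
  simp only [mulVecLin_apply, mulVec, dotProduct]
  rw [Fin.sum_univ_succ, Fin.sum_univ_castSucc]
  simp only [Fin.cons_zero, Fin.cons_succ, Fin.snoc_castSucc, Fin.snoc_last, mul_zero, zero_add,
    add_zero]
  exact Finset.sum_congr rfl fun j _ => congrArg (· * u j) (hBmid i j)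

theorem sum_sq_add_smul_sub {ι : Type*} [Fintype ι] (p v b : ι → ℝ) (hpv : p ⬝ᵥ v = 0) :
    ∑ i, ((p + (v ⬝ᵥ b / v ⬝ᵥ v) • v) i - b i) ^ 2 =
      ∑ i, (p i - b i) ^ 2 - (v ⬝ᵥ b) ^ 2 / v ⬝ᵥ v := by
  rcases eq_or_ne v 0 with rfl | hv
  · simp
  have hexp : ∀ t : ℝ, ∑ i, ((p + t • v) i - b i) ^ 2 =
      ∑ i, (p i - b i) ^ 2 + 2 * t * (p ⬝ᵥ v - v ⬝ᵥ b) + t ^ 2 * v ⬝ᵥ v := by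
    intro t
    simp only [dotProduct, Finset.mul_sum, ← Finset.sum_sub_distrib, ← Finset.sum_add_distrib]
    refine Finset.sum_congr rfl fun i _ => ?_
    simp only [Pi.add_apply, Pi.smul_apply, smul_eq_mul]
    ring
  have hvv : v ⬝ᵥ v ≠ 0 := fun h => hv (dotProduct_self_eq_zero.1 h)
  rw [hexp, hpv]
  field_simp
  ring

theorem iInf_sum_sq_mulVec_sub_lt {ι κ κ' : Type*} [Fintype ι] [Fintype κ] [Fintype κ']
    (A : Matrix ι κ ℝ) (B : Matrix ι κ' ℝ)
    (hAB : LinearMap.range A.mulVecLin ≤ LinearMap.range B.mulVecLin) {v b : ι → ℝ}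
    (hvB : v ∈ LinearMap.range B.mulVecLin) (hvA : ∀ u, A *ᵥ u ⬝ᵥ v = 0) (hvb : v ⬝ᵥ b ≠ 0) :
    (⨅ u, ∑ i, ((B *ᵥ u) i - b i) ^ 2) < ⨅ u, ∑ i, ((A *ᵥ u) i - b i) ^ 2 := by
  have hv : v ≠ 0 := by rintro rfl; simp at hvb
  have hgap : 0 < (v ⬝ᵥ b) ^ 2 / v ⬝ᵥ v := by
    have := dotProduct_self_star_pos_iff.2 hv
    simp only [star_trivial] at this
    positivity
  suffices h : ∀ u, (⨅ u, ∑ i, ((B *ᵥ u) i - b i) ^ 2) + (v ⬝ᵥ b) ^ 2 / v ⬝ᵥ v ≤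
      ∑ i, ((A *ᵥ u) i - b i) ^ 2 by
    linarith [le_ciInf h]
  intro u
  obtain ⟨c, hc⟩ := hAB ⟨u, rfl⟩
  obtain ⟨d, hd⟩ := hvB
  have hbdd : BddBelow (Set.range fun u => ∑ i, ((B *ᵥ u) i - b i) ^ 2) :=
    ⟨0, by rintro _ ⟨u, rfl⟩; positivity⟩
  have hle := ciInf_le hbdd (c + (v ⬝ᵥ b / v ⬝ᵥ v) • d)
  simp only [mulVecLin_apply] at hc hd
  rw [mulVec_add, mulVec_smul, hc, hd, sum_sq_add_smul_sub _ _ _ (hvA u)] at hle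
  linarith

theorem MeasureTheory.Measure.pi_null_of_forall_insertNth_null {n : ℕ} {α : Fin (n + 1) → Type*}
    [∀ i, MeasurableSpace (α i)] (μ : ∀ i, Measure (α i)) [∀ i, SigmaFinite (μ i)]
    (i : Fin (n + 1)) {s : Set (∀ j, α j)} (hs : MeasurableSet s)
    (h : ∀ y, μ i {x | i.insertNth x y ∈ s} = 0) : Measure.pi μ s = 0 := by
  rw [← (measurePreserving_piFinSuccAbove μ i).symm.measure_preimage_equiv s,
    Measure.prod_apply_symm ((MeasurableEquiv.piFinSuccAbove α i).symm.measurable hs)]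
  exact (lintegral_congr h).trans lintegral_zero

theorem subsingleton_setOf_dotProduct_insertNth_eq {n : ℕ} {v : Fin (n + 1) → ℝ} {i : Fin (n + 1)}
    (hi : v i ≠ 0) (y : Fin n → ℝ) (c : ℝ) :
    {x : ℝ | v ⬝ᵥ i.insertNth x y = c}.Subsingleton := by
  intro x₁ hx₁ x₂ hx₂
  simp only [Set.mem_ofPred_eq, dotProduct, Fin.sum_univ_succAbove _ i, Fin.insertNth_apply_same,
    Fin.insertNth_apply_succAbove] at hx₁ hx₂
  exact mul_left_cancel₀ hi (by linarith)

theorem MeasureTheory.Measure.pi_setOf_dotProduct_eq_null {m : ℕ} (μ : Fin m → Measure ℝ)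
    [∀ i, SigmaFinite (μ i)] [∀ i, NullSingletonClass (μ i)] {v : Fin m → ℝ} (hv : v ≠ 0) (c : ℝ) :
    Measure.pi μ {b | v ⬝ᵥ b = c} = 0 := by
  obtain ⟨i, hi⟩ := Function.ne_iff.1 hv
  cases m with
  | zero => exact i.elim0
  | succ m =>
    refine Measure.pi_null_of_forall_insertNth_null μ i ?_ fun y =>
      (subsingleton_setOf_dotProduct_insertNth_eq hi y c).measure_zero _
    exact measurableSet_eq_fun (by fun_prop) measurable_const

/-- Claim 1 (Inflating Effect): appending two columns to a tall matrix `A`,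
strictly increasing its rank, strictly decreases the least-squares residual
for almost every right-hand side `b` whose coordinates are i.i.d. with a
density with respect to Lebesgue measure. -/
theorem inflating_effect
    (m n : ℕ)
    (A : Matrix (Fin m) (Fin n) ℝ)
    (B : Matrix (Fin m) (Fin (n + 2)) ℝ)
    (hBmid : ∀ i (j : Fin n), B i ⟨(j : ℕ) + 1, by omega⟩ = A i j)
    (hrank : A.rank < B.rank)
    (f : ℝ → ENNReal)
    (hprob : IsProbabilityMeasure (volume.withDensity f)) :
    (Measure.pi fun _ : Fin m => volume.withDensity f)
      {b : Fin m → ℝ |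
        (⨅ u : Fin n → ℝ, ∑ i, (A.mulVec u i - b i) ^ 2) ≤
          ⨅ u : Fin (n + 2) → ℝ, ∑ i, (B.mulVec u i - b i) ^ 2} = 0 := by
  have hAB := range_mulVecLin_le_of_middle_columns A B hBmid
  obtain ⟨v, hvB, hv0, hvA⟩ := exists_mem_ne_zero_forall_dotProduct_eq_zero_of_lt
    (Submodule.lt_of_le_of_finrank_lt_finrank hAB hrank)
  have : NullSingletonClass (volume.withDensity f) :=
    ⟨fun x => withDensity_absolutelyContinuous _ _ (measure_singleton x)⟩
  refine measure_mono_null (fun b hb => ?_) (Measure.pi_setOf_dotProduct_eq_null _ hv0 0)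
  by_contra hvb
  exact (iInf_sum_sq_mulVec_sub_lt A B hAB hvB (fun u => hvA _ ⟨u, rfl⟩) hvb).not_ge hb
end

section
/- Let E be a finite-dimensional real inner product space and let S ≤ T be subspaces of E (i.e., S is contained in T). Then for every b ∈ E, the distance from b to T is at most the distance from b to S, and equality dist(b, T) = dist(b, S) holds if and only if b belongs to the subspace S + T^⊥ (the sum of S and the orthogonal complement of T). -/
/-!
Since `S.starProjection b ∈ T`, the residual `b - P_S b` splits orthogonally as
`(b - P_T b) + (P_T b - P_S b)`, so by Pythagoras the two distances agree iff `P_T b = P_S b`,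
i.e. iff `b = P_S b + (b - P_T b)` lies in `S ⊔ Tᗮ`.
-/

open Metric

namespace Submodule

variable {𝕜 E : Type*} [RCLike 𝕜] [NormedAddCommGroup E] [InnerProductSpace 𝕜 E]

theorem infDist_eq_norm_sub_starProjection (U : Submodule 𝕜 E) [U.HasOrthogonalProjection]
    (b : E) : infDist b (U : Set E) = ‖b - U.starProjection b‖ := by
  rw [starProjection_minimal, infDist_eq_iInf]
  simp only [dist_eq_norm]
  rfl

variable {S T : Submodule 𝕜 E} [S.HasOrthogonalProjection] [T.HasOrthogonalProjection]

theorem norm_sub_starProjection_sq_of_le (hST : S ≤ T) (b : E) :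
    ‖b - S.starProjection b‖ ^ 2 =
      ‖b - T.starProjection b‖ ^ 2 + ‖T.starProjection b - S.starProjection b‖ ^ 2 := by
  have hperp : inner 𝕜 (b - T.starProjection b) (T.starProjection b - S.starProjection b) = 0 :=
    T.inner_left_of_mem_orthogonal
      (T.sub_mem (T.starProjection_apply_mem b) (hST (S.starProjection_apply_mem b)))
      (T.sub_starProjection_mem_orthogonal b)
  simpa only [sq, sub_add_sub_cancel] using
    norm_add_sq_eq_norm_sq_add_norm_sq_of_inner_eq_zero _ _ hperp

theorem norm_sub_starProjection_eq_iff_of_le (hST : S ≤ T) (b : E) :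
    ‖b - T.starProjection b‖ = ‖b - S.starProjection b‖ ↔
      T.starProjection b = S.starProjection b := by
  rw [← sq_eq_sq₀ (norm_nonneg _) (norm_nonneg _), norm_sub_starProjection_sq_of_le hST,
    left_eq_add, sq_eq_zero_iff, norm_eq_zero, sub_eq_zero]

theorem starProjection_eq_starProjection_iff_mem_sup_orthogonal (hST : S ≤ T) (b : E) :
    T.starProjection b = S.starProjection b ↔ b ∈ S ⊔ Tᗮ := by
  constructor
  · intro h
    convert add_mem_sup (S.starProjection_apply_mem b) (T.sub_starProjection_mem_orthogonal b)
    rw [h, add_sub_cancel]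
  · intro hb
    obtain ⟨s, hs, r, hr, rfl⟩ := mem_sup.mp hb
    rw [map_add, map_add, starProjection_eq_self_iff.mpr hs, starProjection_eq_self_iff.mpr (hST hs),
      T.starProjection_apply_eq_zero_iff.mpr hr,
      S.starProjection_apply_eq_zero_iff.mpr (orthogonal_le hST hr)]

end Submodule

/-- For nested subspaces `S ≤ T` of a finite-dimensional real inner product
space, enlarging the subspace can only decrease the distance from a point,
and the distance stays equal exactly on the subspace `S ⊔ Tᗮ`. -/
theorem dist_le_of_le_and_eq_iff_mem_sup_orthogonal
    {E : Type*} [NormedAddCommGroup E] [InnerProductSpace ℝ E]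
    [FiniteDimensional ℝ E]
    (S T : Submodule ℝ E) (hST : S ≤ T) (b : E) :
    Metric.infDist b (T : Set E) ≤ Metric.infDist b (S : Set E) ∧
      (Metric.infDist b (T : Set E) = Metric.infDist b (S : Set E) ↔
        b ∈ S ⊔ Tᗮ) := by
  refine ⟨infDist_le_infDist_of_subset hST ⟨0, S.zero_mem⟩, ?_⟩
  rw [T.infDist_eq_norm_sub_starProjection, S.infDist_eq_norm_sub_starProjection,
    Submodule.norm_sub_starProjection_eq_iff_of_le hST,
    Submodule.starProjection_eq_starProjection_iff_mem_sup_orthogonal hST]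
end

section
/- Let M = 2m+1 be odd, let α, β, γ > 0, and let f : ℝ → ℝ be defined by f(x) = β·exp(−γ·|x|^α) for x ∈ [−1, 1] and f(x) = 0 otherwise; assume f integrates to 1 so that μ = f·(Lebesgue measure) is a probability measure on ℝ. Let X = (X₁, …, X_M) be a random vector whose law is the M-fold product measure μ^⊗M (i.e., the X_i are i.i.d. with density f). Then the M×M Toeplitz matrix T_X(M), with entries T_X(M)[i,j] = X_{m+1+i−j} (where X_t is interpreted as 0 for t < 1 or t > M), is invertible with probability one: ℙ(rank(T_X(M)) = M) = 1, equivalently ℙ(det(T_X(M)) = 0) = 0. -/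
open MeasureTheory

/-- Zero extension of a finite signal `x ∈ ℝ^M` to integer indices
(zero-based: `zext M x t = x t` for `0 ≤ t < M`, and `0` otherwise). -/
def zext (M : ℕ) (x : Fin M → ℝ) (t : ℤ) : ℝ :=
  if h : 0 ≤ t ∧ t < (M : ℤ) then x ⟨t.toNat, by omega⟩ else 0

/-- The zero set of a nonzero multivariate real polynomial is null for any
product of measures absolutely continuous w.r.t. Lebesgue measure. -/
theorem mvpoly_zero_set_null (μ : Measure ℝ) [SigmaFinite μ] (hμ : μ ≪ volume) :
    ∀ (n : ℕ) (P : MvPolynomial (Fin n) ℝ), P ≠ 0 →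
      Measure.pi (fun _ : Fin n => μ) {x | MvPolynomial.eval x P = 0} = 0 := by
  intro n
  induction n with
  | zero =>
      intro P hP
      obtain ⟨c, rfl⟩ := MvPolynomial.C_surjective (Fin 0) P
      have hc : c ≠ 0 := fun h => hP (by simp [h])
      have : {x : Fin 0 → ℝ | MvPolynomial.eval x (MvPolynomial.C c) = 0} = ∅ := by
        ext x; simp [hc]
      rw [this]; exact measure_empty
  | succ n ih =>
      intro P hP
      set Q : Polynomial (MvPolynomial (Fin n) ℝ) := MvPolynomial.finSuccEquiv ℝ n P with hQ
      have hQ0 : Q ≠ 0 := fun h =>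
        hP ((map_eq_zero_iff _ (MvPolynomial.finSuccEquiv ℝ n).injective).mp h)
      have hlead : Q.coeff Q.natDegree ≠ 0 := Polynomial.leadingCoeff_ne_zero.mpr hQ0
      -- the bad set of lower coordinates
      have hB : Measure.pi (fun _ : Fin n => μ)
          {y | MvPolynomial.eval y (Q.coeff Q.natDegree) = 0} = 0 :=
        ih _ hlead
      -- measurability of the zero set
      have hScont : Continuous fun x : Fin (n + 1) → ℝ => MvPolynomial.eval x P :=
        MvPolynomial.continuous_eval P
      have hSmeas : MeasurableSet {x : Fin (n + 1) → ℝ | MvPolynomial.eval x P = 0} :=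
        (isClosed_eq hScont continuous_const).measurableSet
      -- transfer to the product ℝ × (Fin n → ℝ)
      set e := MeasurableEquiv.piFinSuccAbove (fun _ : Fin (n + 1) => ℝ) 0
      have hmp : MeasurePreserving e.symm
          ((μ).prod (Measure.pi fun _ : Fin n => μ)) (Measure.pi fun _ : Fin (n + 1) => μ) :=
        (measurePreserving_piFinSuccAbove (fun _ : Fin (n + 1) => (μ : Measure ℝ)) 0).symm
      rw [← hmp.measure_preimage hSmeas.nullMeasurableSet]
      -- describe the preimage
      have hpre : ∀ p : ℝ × (Fin n → ℝ),
          (p ∈ e.symm ⁻¹' {x | MvPolynomial.eval x P = 0} ↔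
            Polynomial.eval p.1 (Q.map (MvPolynomial.eval p.2)) = 0) := by
        rintro ⟨a, y⟩
        have : (e.symm (a, y) : Fin (n + 1) → ℝ) = Fin.cons a y := by
          ext i
          simp [e, MeasurableEquiv.piFinSuccAbove, Fin.insertNthEquiv, Fin.insertNth_zero]
        simp only [Set.mem_preimage, Set.mem_setOf_eq, this]
        rw [MvPolynomial.eval_eq_eval_mv_eval']
      -- rewrite via swap to slice over the second coordinate
      have hswap : (μ.prod (Measure.pi fun _ : Fin n => μ))
            (e.symm ⁻¹' {x | MvPolynomial.eval x P = 0})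
          = ((Measure.pi fun _ : Fin n => μ).prod μ)
            (Prod.swap ⁻¹' (e.symm ⁻¹' {x | MvPolynomial.eval x P = 0})) := by
        have hT : MeasurableSet (e.symm ⁻¹' {x : Fin (n+1) → ℝ | MvPolynomial.eval x P = 0}) :=
          e.symm.measurable hSmeas
        rw [← Measure.prod_swap, Measure.map_apply measurable_swap hT]
      rw [hswap]
      have hT' : MeasurableSet
          (Prod.swap ⁻¹' (e.symm ⁻¹' {x : Fin (n+1) → ℝ | MvPolynomial.eval x P = 0})) :=
        measurable_swap (e.symm.measurable hSmeas)
      rw [Measure.measure_prod_null hT']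
      -- a.e. lower coordinate is good
      have hae : ∀ᵐ y ∂(Measure.pi fun _ : Fin n => μ),
          MvPolynomial.eval y (Q.coeff Q.natDegree) ≠ 0 := by
        rw [MeasureTheory.ae_iff]
        simpa using hB
      filter_upwards [hae] with y hy
      have hmap0 : Q.map (MvPolynomial.eval y) ≠ 0 := by
        intro h
        apply hy
        have := congrArg (fun q => Polynomial.coeff q Q.natDegree) h
        simpa [Polynomial.coeff_map] using this
      have hfin : Set.Finite {a : ℝ | Polynomial.eval a (Q.map (MvPolynomial.eval y)) = 0} :=
        Polynomial.finite_setOf_isRoot hmap0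
      have hsets : Prod.mk y ⁻¹'
          (Prod.swap ⁻¹' (e.symm ⁻¹' {x : Fin (n+1) → ℝ | MvPolynomial.eval x P = 0}))
          = {a : ℝ | Polynomial.eval a (Q.map (MvPolynomial.eval y)) = 0} := by
        ext a
        simpa using hpre (a, y)
      rw [hsets]
      exact hμ (hfin.measure_zero _)

/-- The "symbolic" Toeplitz matrix as a matrix of multivariate polynomials. -/
noncomputable def toeplitzPoly (m : ℕ) :
    Matrix (Fin (2 * m + 1)) (Fin (2 * m + 1)) (MvPolynomial (Fin (2 * m + 1)) ℝ) :=
  Matrix.of fun i j : Fin (2 * m + 1) =>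
    if h : 0 ≤ (m : ℤ) + (i : ℤ) - (j : ℤ) ∧ (m : ℤ) + (i : ℤ) - (j : ℤ) < ((2 * m + 1 : ℕ) : ℤ)
    then MvPolynomial.X ⟨((m : ℤ) + (i : ℤ) - (j : ℤ)).toNat, by omega⟩ else 0

theorem eval_toeplitzPoly (m : ℕ) (x : Fin (2 * m + 1) → ℝ) :
    MvPolynomial.eval x (toeplitzPoly m).det =
      (Matrix.of fun i j : Fin (2 * m + 1) =>
        zext (2 * m + 1) x ((m : ℤ) + (i : ℤ) - (j : ℤ))).det := by
  rw [RingHom.map_det (MvPolynomial.eval x) (toeplitzPoly m)]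
  congr 1
  ext i j
  simp only [RingHom.mapMatrix_apply, Matrix.map_apply, toeplitzPoly, Matrix.of_apply]
  unfold zext
  by_cases h : 0 ≤ (m : ℤ) + (i : ℤ) - (j : ℤ) ∧ (m : ℤ) + (i : ℤ) - (j : ℤ) < ((2 * m + 1 : ℕ) : ℤ)
  · rw [dif_pos h, dif_pos h, MvPolynomial.eval_X]
  · rw [dif_neg h, dif_neg h, map_zero]

theorem toeplitzPoly_det_ne_zero (m : ℕ) : (toeplitzPoly m).det ≠ 0 := by
  intro h
  have hx := eval_toeplitzPoly m (fun k => if (k : ℕ) = m then 1 else 0)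
  rw [h] at hx
  have hid : (Matrix.of fun i j : Fin (2 * m + 1) =>
      zext (2 * m + 1) (fun k => if (k : ℕ) = m then (1 : ℝ) else 0)
        ((m : ℤ) + (i : ℤ) - (j : ℤ))) = 1 := by
    ext i j
    simp only [Matrix.of_apply, zext, Matrix.one_apply]
    by_cases hij : i = j
    · subst hij
      have h1 : 0 ≤ (m : ℤ) + (i : ℤ) - (i : ℤ) ∧ (m : ℤ) + (i : ℤ) - (i : ℤ) < ((2*m+1 : ℕ) : ℤ) := by
        constructor <;> omega
      rw [dif_pos h1, if_pos rfl]
      have : ((m : ℤ) + (i : ℤ) - (i : ℤ)).toNat = m := by omega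
      simp [this]
    · rw [if_neg hij]
      split
      · next h1 =>
          have hji : ((m : ℤ) + (i : ℤ) - (j : ℤ)).toNat ≠ m := by
            have : (i : ℤ) ≠ (j : ℤ) := by
              exact_mod_cast fun hh => hij (Fin.ext (by exact_mod_cast hh))
            omega
          exact if_neg hji
      · rfl
  rw [hid] at hx
  simp at hx

/-- Claim 2 / Theorem 2: if the entries of `X ∈ ℝ^M` (`M = 2m+1`) are i.i.d.
with hyper-Laplacian density `f(x) = β exp(-γ |x|^α)` on `[-1,1]` (and `0`
outside), then the square Toeplitz convolution matrix `T_X(M)` is invertible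
with probability one: its rank is `M` almost surely, equivalently its
determinant vanishes with probability zero. -/
theorem toeplitz_full_rank_almost_surely
    (m : ℕ) (α β γ : ℝ) (hα : 0 < α) (hβ : 0 < β) (hγ : 0 < γ)
    (f : ℝ → ENNReal)
    (hf : ∀ t : ℝ, f t =
      if t ∈ Set.Icc (-1 : ℝ) 1 then ENNReal.ofReal (β * Real.exp (-γ * |t| ^ α))
      else 0)
    (hprob : IsProbabilityMeasure (volume.withDensity f)) :
    (Measure.pi fun _ : Fin (2 * m + 1) => volume.withDensity f)
        {x : Fin (2 * m + 1) → ℝ |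
          (Matrix.of fun i j : Fin (2 * m + 1) =>
            zext (2 * m + 1) x ((m : ℤ) + (i : ℤ) - (j : ℤ))).rank = 2 * m + 1}
        = 1 ∧
      (Measure.pi fun _ : Fin (2 * m + 1) => volume.withDensity f)
        {x : Fin (2 * m + 1) → ℝ |
          (Matrix.of fun i j : Fin (2 * m + 1) =>
            zext (2 * m + 1) x ((m : ℤ) + (i : ℤ) - (j : ℤ))).det = 0} = 0 := by
  haveI := hprob
  set μ := volume.withDensity f with hμdef
  set ν := Measure.pi fun _ : Fin (2 * m + 1) => μ with hνdef
  haveI : IsProbabilityMeasure ν := by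
    rw [hνdef]; infer_instance
  -- the determinant zero set is the zero set of the nonzero polynomial `(toeplitzPoly m).det`
  have hset : {x : Fin (2 * m + 1) → ℝ |
        (Matrix.of fun i j : Fin (2 * m + 1) =>
          zext (2 * m + 1) x ((m : ℤ) + (i : ℤ) - (j : ℤ))).det = 0}
      = {x | MvPolynomial.eval x (toeplitzPoly m).det = 0} := by
    ext x
    simp only [Set.mem_setOf_eq, eval_toeplitzPoly]
  have hdet0 : ν {x : Fin (2 * m + 1) → ℝ |
      (Matrix.of fun i j : Fin (2 * m + 1) =>
        zext (2 * m + 1) x ((m : ℤ) + (i : ℤ) - (j : ℤ))).det = 0} = 0 := by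
    rw [hset]
    exact mvpoly_zero_set_null μ (withDensity_absolutelyContinuous _ _) _ _
      (toeplitzPoly_det_ne_zero m)
  refine ⟨?_, hdet0⟩
  -- rank = M on the complement of the determinant zero set
  have hsub : {x : Fin (2 * m + 1) → ℝ |
        (Matrix.of fun i j : Fin (2 * m + 1) =>
          zext (2 * m + 1) x ((m : ℤ) + (i : ℤ) - (j : ℤ))).det = 0}ᶜ
      ⊆ {x : Fin (2 * m + 1) → ℝ |
        (Matrix.of fun i j : Fin (2 * m + 1) =>
          zext (2 * m + 1) x ((m : ℤ) + (i : ℤ) - (j : ℤ))).rank = 2 * m + 1} := by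
    intro x hx
    simp only [Set.mem_compl_iff, Set.mem_setOf_eq] at hx
    have := Matrix.rank_of_isUnit
      (Matrix.of fun i j : Fin (2 * m + 1) =>
        zext (2 * m + 1) x ((m : ℤ) + (i : ℤ) - (j : ℤ)))
      (Matrix.isUnit_iff_isUnit_det _ |>.mpr (isUnit_iff_ne_zero.mpr hx))
    simpa using this
  refine le_antisymm prob_le_one ?_
  calc (1 : ENNReal) = ν Set.univ := (measure_univ).symm
    _ ≤ ν {x : Fin (2 * m + 1) → ℝ |
        (Matrix.of fun i j : Fin (2 * m + 1) =>
          zext (2 * m + 1) x ((m : ℤ) + (i : ℤ) - (j : ℤ))).det = 0}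
        + ν {x : Fin (2 * m + 1) → ℝ |
        (Matrix.of fun i j : Fin (2 * m + 1) =>
          zext (2 * m + 1) x ((m : ℤ) + (i : ℤ) - (j : ℤ))).rank = 2 * m + 1} := by
        refine le_trans (measure_mono ?_) (measure_union_le _ _)
        intro x _
        by_cases h : (Matrix.of fun i j : Fin (2 * m + 1) =>
          zext (2 * m + 1) x ((m : ℤ) + (i : ℤ) - (j : ℤ))).det = 0
        · exact Or.inl h
        · exact Or.inr (hsub h)
    _ = ν {x : Fin (2 * m + 1) → ℝ |
        (Matrix.of fun i j : Fin (2 * m + 1) =>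
          zext (2 * m + 1) x ((m : ℤ) + (i : ℤ) - (j : ℤ))).rank = 2 * m + 1} := by
        rw [hdet0, zero_add]
end

section
/- Let M = 2m+1 be odd, let μ be a probability measure on ℝ that is absolutely continuous with respect to Lebesgue measure, and let X = (X₁, …, X_M) have law μ^⊗M. For odd L = 2l+1, let T_X(L) be the M×L matrix with entries T_X(L)[i,j] = X_{l+1+i−j} (with X_t interpreted as 0 for t < 1 or t > M). Then for every odd L with L + 2 ≤ M, with probability one rank(T_X(L+2)) > rank(T_X(L)). -/
open MeasureTheory

/-- The `M × (2l+1)` Toeplitz matrix representing 1-D convolution of the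
signal `x ∈ ℝ^M` with a kernel of length `2l+1`; its zero-based `(i,j)`
entry is `x_{l+i-j}`, with the zero-extension convention. -/
def convMat (M l : ℕ) (x : Fin M → ℝ) : Matrix (Fin M) (Fin (2 * l + 1)) ℝ :=
  Matrix.of fun i j => zext M x ((l : ℤ) + (i : ℤ) - (j : ℤ))

/-!
The determinant of the square Toeplitz matrix `T_x(M)` is a polynomial in `x`, and it is not the
zero polynomial because the unit impulse at the centre gives `T_x(M) = 1`. The zero set of a
nonzero polynomial is null for any product of atomless measures: by Fubini, for almost every
choice of the last `n` coordinates the polynomial in the first one keeps a nonzero leading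
coefficient, so it has finitely many roots. Hence `T_X(M)` is almost surely invertible, and then
every `T_X(L)`, being made of `L` of its columns, has full column rank `L`.
-/

theorem MvPolynomial.ae_eval_ne_zero (μ : Measure ℝ) [SigmaFinite μ] [NullSingletonClass μ] :
    ∀ {n : ℕ} {p : MvPolynomial (Fin n) ℝ}, p ≠ 0 →
      ∀ᵐ x ∂(Measure.pi fun _ : Fin n => μ), MvPolynomial.eval x p ≠ 0
  | 0, p, hp => by
    obtain ⟨c, rfl⟩ := MvPolynomial.C_surjective (Fin 0) p
    exact .of_forall fun x => by simpa using hp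
  | n + 1, p, hp => by
    set q := MvPolynomial.finSuccEquiv ℝ n p
    have hq : q.leadingCoeff ≠ 0 :=
      Polynomial.leadingCoeff_ne_zero.mpr ((MvPolynomial.finSuccEquiv ℝ n).map_ne_zero_iff.mpr hp)
    have hfiber : ∀ᵐ s ∂(Measure.pi fun _ : Fin n => μ), ∀ᵐ y ∂μ,
        MvPolynomial.eval (Fin.cons y s) p ≠ 0 := by
      filter_upwards [ae_eval_ne_zero μ hq] with s hs
      have hqs : q.map (MvPolynomial.eval s) ≠ 0 := fun h => hs <| by
        simpa using congrArg (Polynomial.coeff · q.natDegree) h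
      simpa [MvPolynomial.eval_eq_eval_mv_eval'] using
        (Polynomial.finite_setOfPred_isRoot hqs).countable.ae_notMem μ
    have hmeas :
        MeasurableSet {z : ℝ × (Fin n → ℝ) | MvPolynomial.eval (Fin.cons z.1 z.2) p ≠ 0} :=
      (((MvPolynomial.continuous_eval p).comp
        (continuous_fst.finCons continuous_snd)).measurable) (measurableSet_singleton 0).compl
    rw [← (measurePreserving_piFinSuccAbove (fun _ => μ) 0).symm.map_eq,
      (MeasurableEquiv.measurableEmbedding _).ae_map_iff]
    simp only [MeasurableEquiv.piFinSuccAbove_symm_apply, Fin.insertNthEquiv_zero]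
    exact (Measure.ae_prod_iff_ae_ae hmeas).mpr ((Measure.ae_ae_comm hmeas).mpr hfiber)

theorem Matrix.rank_submatrix_col_of_isUnit {K n o : Type*} [Field K] [Fintype n] [DecidableEq n]
    [Fintype o] {A : Matrix n n K} (hA : IsUnit A) {f : o → n} (hf : Function.Injective f) :
    (A.submatrix id f).rank = Fintype.card o := by
  rw [← Matrix.rank_transpose]
  exact LinearIndependent.rank_matrix ((Matrix.linearIndependent_cols_of_isUnit hA).comp f hf)

noncomputable def genericConvMat (M l : ℕ) :
    Matrix (Fin M) (Fin (2 * l + 1)) (MvPolynomial (Fin M) ℝ) :=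
  Matrix.of fun i j =>
    if h : 0 ≤ (l : ℤ) + i - j ∧ (l : ℤ) + i - j < M then
      MvPolynomial.X ⟨((l : ℤ) + i - j).toNat, by omega⟩
    else 0

theorem genericConvMat_map_eval (M l : ℕ) (x : Fin M → ℝ) :
    (genericConvMat M l).map (MvPolynomial.eval x) = convMat M l x := by
  ext i j
  simp only [genericConvMat, convMat, zext, Matrix.map_apply, Matrix.of_apply]
  split_ifs <;> simp

theorem convMat_single_center (m : ℕ) :
    convMat (2 * m + 1) m (Pi.single ⟨m, by omega⟩ 1) = 1 := by
  ext i j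
  simp only [convMat, zext, Matrix.of_apply, Matrix.one_apply, Pi.single_apply, Fin.ext_iff]
  split_ifs <;> first | rfl | omega

theorem det_genericConvMat_ne_zero (m : ℕ) : (genericConvMat (2 * m + 1) m).det ≠ 0 := by
  intro h
  have := congrArg (MvPolynomial.eval (Pi.single ⟨m, by omega⟩ 1)) h
  rw [RingHom.map_det, RingHom.mapMatrix_apply, genericConvMat_map_eval, convMat_single_center,
    Matrix.det_one, map_zero] at this
  exact one_ne_zero this

theorem ae_det_convMat_ne_zero (m : ℕ) (μ : Measure ℝ) [SigmaFinite μ]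
    [NullSingletonClass μ] :
    ∀ᵐ x ∂(Measure.pi fun _ : Fin (2 * m + 1) => μ), (convMat (2 * m + 1) m x).det ≠ 0 := by
  filter_upwards [MvPolynomial.ae_eval_ne_zero μ (det_genericConvMat_ne_zero m)] with x hx
  rwa [RingHom.map_det, RingHom.mapMatrix_apply, genericConvMat_map_eval] at hx

theorem convMat_eq_submatrix (M : ℕ) {l l' : ℕ} (h : l ≤ l') (x : Fin M → ℝ) :
    convMat M l x =
      (convMat M l' x).submatrix id fun j : Fin (2 * l + 1) => ⟨j + (l' - l), by omega⟩ := by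
  ext i j
  simp only [convMat, Matrix.submatrix_apply, Matrix.of_apply, id]
  congr 1
  push_cast [h]
  ring

theorem rank_convMat_of_det_ne_zero {m l : ℕ} (h : l ≤ m) {x : Fin (2 * m + 1) → ℝ}
    (hx : (convMat (2 * m + 1) m x).det ≠ 0) : (convMat (2 * m + 1) l x).rank = 2 * l + 1 := by
  rw [convMat_eq_submatrix _ h, Matrix.rank_submatrix_col_of_isUnit
    ((Matrix.isUnit_iff_isUnit_det _).mpr hx.isUnit), Fintype.card_fin]
  intro j j' hjj'
  simpa [Fin.ext_iff] using hjj'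

/-- Equation (8) of the paper: if the entries of `X ∈ ℝ^M` (`M = 2m+1`) are
i.i.d. with a law absolutely continuous with respect to Lebesgue measure,
then for every odd kernel size `L = 2l+1` with `L + 2 ≤ M`, almost surely
`rank (T_X(L+2)) > rank (T_X(L))`. -/
theorem rank_strict_increase_almost_surely
    (m : ℕ) (μ : Measure ℝ) [IsProbabilityMeasure μ] (hμ : μ ≪ volume) :
    ∀ l : ℕ, 2 * l + 3 ≤ 2 * m + 1 →
      (Measure.pi fun _ : Fin (2 * m + 1) => μ)
        {x : Fin (2 * m + 1) → ℝ |
          (convMat (2 * m + 1) l x).rank < (convMat (2 * m + 1) (l + 1) x).rank}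
        = 1 := by
  intro l hl
  have : NullSingletonClass μ := ⟨fun x => hμ (measure_singleton x)⟩
  have hrank : ∀ᵐ x ∂(Measure.pi fun _ : Fin (2 * m + 1) => μ),
      (convMat (2 * m + 1) l x).rank < (convMat (2 * m + 1) (l + 1) x).rank := by
    filter_upwards [ae_det_convMat_ne_zero m μ] with x hx
    rw [rank_convMat_of_det_ne_zero (by omega) hx, rank_convMat_of_det_ne_zero (by omega) hx]
    omega
  exact (measure_congr (ae_eq_univ.mpr (ae_iff.mp hrank))).trans measure_univ
end
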